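/- Let β : ℝ → ℝ be C² and even with β'' ≥ 0, β''(r) ≤ M/ϑ for all r, and r² β''(r) ≤ M ϑ for all r, where M, ϑ > 0. Let λ ∈ [0,1), c ≥ 0, and a, b ∈ ℝ with |b| ≤ λ|a| + c. Then for every θ ∈ [0,1]: b² β''(a + θ b) ≤ 2(1−λ)^{−2} ( (a+θb)² + c² ) β''(a+θb) + (2c²/ϑ) M ≤ C (ϑ + c²/ϑ), where C depends only on M and λ (one may take C = M·max(2(1−λ)^{−2}, 2(1−λ)^{−2} + 2)). -/
import Mathlib


set_option maxHeartbeats 1000000 in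
/-- Key dissipation estimate: if β is C², even, with 0 ≤ β'' ≤ M/ϑ
and r²β''(r) ≤ Mϑ, and |b| ≤ λ|a| + c with λ ∈ [0,1), c ≥ 0, then for θ ∈ [0,1],
b² β''(a+θb) ≤ 2(1−λ)⁻²((a+θb)² + c²)β''(a+θb) + (2c²/ϑ)M ≤ C(ϑ + c²/ϑ)
with C = M · max(2(1−λ)⁻², 2(1−λ)⁻² + 2). -/
theorem stmt10
    (β : ℝ → ℝ) (hC2 : ContDiff ℝ 2 β)
    (heven : ∀ r : ℝ, β (-r) = β r)
    (M ϑ : ℝ) (hM : 0 < M) (hϑ : 0 < ϑ)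
    (hpos : ∀ r : ℝ, 0 ≤ deriv (deriv β) r)
    (hbdd : ∀ r : ℝ, deriv (deriv β) r ≤ M / ϑ)
    (hdecay : ∀ r : ℝ, r ^ 2 * deriv (deriv β) r ≤ M * ϑ)
    (lam c a b : ℝ) (hlam0 : 0 ≤ lam) (hlam1 : lam < 1) (hc : 0 ≤ c)
    (hb : |b| ≤ lam * |a| + c) :
    ∀ θ : ℝ, θ ∈ Set.Icc (0 : ℝ) 1 →
      b ^ 2 * deriv (deriv β) (a + θ * b)
          ≤ 2 * ((1 - lam)⁻¹) ^ 2 * ((a + θ * b) ^ 2 + c ^ 2)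
              * deriv (deriv β) (a + θ * b) + (2 * c ^ 2 / ϑ) * M ∧
      2 * ((1 - lam)⁻¹) ^ 2 * ((a + θ * b) ^ 2 + c ^ 2)
          * deriv (deriv β) (a + θ * b) + (2 * c ^ 2 / ϑ) * M
        ≤ M * max (2 * ((1 - lam)⁻¹) ^ 2) (2 * ((1 - lam)⁻¹) ^ 2 + 2)
            * (ϑ + c ^ 2 / ϑ) := by
  intro θ hθ
  obtain ⟨hθ0, hθ1⟩ := hθ
  obtain ⟨r, hr⟩ : ∃ r : ℝ, a + θ * b = r := ⟨_, rfl⟩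
  rw [hr]
  obtain ⟨B, hB⟩ : ∃ B : ℝ, deriv (deriv β) r = B := ⟨_, rfl⟩
  rw [hB]
  obtain ⟨s, hs⟩ : ∃ s : ℝ, (1 - lam)⁻¹ = s := ⟨_, rfl⟩
  rw [hs]
  have hB0 : 0 ≤ B := hB ▸ hpos r
  have hBb : B ≤ M / ϑ := hB ▸ hbdd r
  have hBd : r ^ 2 * B ≤ M * ϑ := hB ▸ hdecay r
  have h1l : 0 < 1 - lam := by linarith
  have hs0 : 0 ≤ s := hs ▸ le_of_lt (inv_pos.mpr h1l)
  have hs1 : s * (1 - lam) = 1 := hs ▸ inv_mul_cancel₀ (ne_of_gt h1l)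
  -- |a| ≤ |r| + |b|
  have habs : |a| ≤ |r| + |b| := by
    have ha' : a = r - θ * b := by rw [← hr]; ring
    calc |a| = |r - θ * b| := by rw [← ha']
      _ ≤ |r| + |θ * b| := abs_sub _ _
      _ ≤ |r| + |b| := by
          have hθb : |θ * b| ≤ |b| := by
            rw [abs_mul]
            have hθabs : |θ| ≤ 1 := by rw [abs_of_nonneg hθ0]; exact hθ1
            nlinarith [abs_nonneg b]
          linarith
  -- (1-lam)|b| ≤ lam |r| + c
  have hstep : (1 - lam) * |b| ≤ lam * |r| + c := by
    have := mul_le_mul_of_nonneg_left habs hlam0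
    nlinarith
  -- (1-lam)^2 b^2 ≤ 2 (r^2 + c^2)
  have hsq : (1 - lam) ^ 2 * b ^ 2 ≤ 2 * (r ^ 2 + c ^ 2) := by
    have h2 : ((1 - lam) * |b|) ^ 2 ≤ (lam * |r| + c) ^ 2 := by
      have hnn : 0 ≤ (1 - lam) * |b| := mul_nonneg (le_of_lt h1l) (abs_nonneg b)
      nlinarith
    have h3 : (1 - lam) ^ 2 * b ^ 2 = ((1 - lam) * |b|) ^ 2 := by
      rw [mul_pow, sq_abs]
    rw [h3]
    have hlamr : 0 ≤ (1 - lam) * (1 + lam) * r ^ 2 := by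
      apply mul_nonneg (mul_nonneg h1l.le (by linarith)) (sq_nonneg r)
    nlinarith [sq_nonneg (lam * |r| - c), sq_abs r, abs_nonneg r]
  -- b^2 ≤ 2 s^2 (r^2 + c^2)
  have h4 : s ^ 2 * (1 - lam) ^ 2 = 1 := by rw [← mul_pow, hs1, one_pow]
  have hkey : b ^ 2 ≤ 2 * s ^ 2 * (r ^ 2 + c ^ 2) := by
    calc b ^ 2 = s ^ 2 * (1 - lam) ^ 2 * b ^ 2 := by rw [h4]; ring
      _ = s ^ 2 * ((1 - lam) ^ 2 * b ^ 2) := by ring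
      _ ≤ s ^ 2 * (2 * (r ^ 2 + c ^ 2)) :=
          mul_le_mul_of_nonneg_left hsq (sq_nonneg s)
      _ = 2 * s ^ 2 * (r ^ 2 + c ^ 2) := by ring
  have hfirst : b ^ 2 * B ≤ 2 * s ^ 2 * (r ^ 2 + c ^ 2) * B + (2 * c ^ 2 / ϑ) * M := by
    have h1 := mul_le_mul_of_nonneg_right hkey hB0
    have h2 : 0 ≤ (2 * c ^ 2 / ϑ) * M := by positivity
    linarith
  refine ⟨hfirst, ?_⟩
  have hmax : max (2 * s ^ 2) (2 * s ^ 2 + 2) = 2 * s ^ 2 + 2 :=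
    max_eq_right (by linarith)
  rw [hmax]
  have hcB : c ^ 2 * B ≤ c ^ 2 * (M / ϑ) :=
    mul_le_mul_of_nonneg_left hBb (sq_nonneg c)
  have hMd : c ^ 2 * (M / ϑ) = M * (c ^ 2 / ϑ) := by ring
  have hmain : 2 * s ^ 2 * (r ^ 2 + c ^ 2) * B ≤ 2 * s ^ 2 * (M * ϑ + M * (c ^ 2 / ϑ)) := by
    have hsum : (r ^ 2 + c ^ 2) * B ≤ M * ϑ + M * (c ^ 2 / ϑ) := by
      rw [← hMd]; nlinarith
    calc 2 * s ^ 2 * (r ^ 2 + c ^ 2) * B = 2 * s ^ 2 * ((r ^ 2 + c ^ 2) * B) := by ring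
      _ ≤ 2 * s ^ 2 * (M * ϑ + M * (c ^ 2 / ϑ)) :=
          mul_le_mul_of_nonneg_left hsum (by positivity)
  have hrest : (2 * c ^ 2 / ϑ) * M = 2 * M * (c ^ 2 / ϑ) := by ring
  have h2Mϑ : 0 ≤ 2 * M * ϑ := by positivity
  have hfin : M * (2 * s ^ 2 + 2) * (ϑ + c ^ 2 / ϑ)
      = 2 * s ^ 2 * (M * ϑ + M * (c ^ 2 / ϑ)) + 2 * M * ϑ + 2 * M * (c ^ 2 / ϑ) := by ring
  rw [hfin, hrest]
  linarith
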